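/- For every u ∈ (0, π), the derivative at u of the function u ↦ −d₀⁰(u)/(sin u·(sin u − u·cos u)) equals (2·(−1 + u² + cos(2u)) + u·sin(2u))²/(4·(sin u − u·cos u)²), where d₀⁰(u) = (1/2)·sin u·(2u³·sin u + 3u²·cos u + u·sin³ u − 6u·sin u + 3·cos u·sin² u). -/

import Mathlib

/-!
On `(0, π)` the factor `sin u` cancels, and the function is `-Q u / (2 (sin u - u cos u))`,
where `d₀⁰ = (1/2) sin u · Q`. By the quotient rule and `sin² + cos² = 1` its derivative is
`(u² - 2 sin² u + u sin u cos u)² / (sin u - u cos u)²`, which is the claimed expression once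
the double-angle formulas are expanded.
-/

open Set Real Topology

theorem sin_sub_mul_cos_pos {u : ℝ} (hu : u ∈ Ioo 0 π) : 0 < sin u - u * cos u := by
  have hs : 0 < sin u := sin_pos_of_pos_of_lt_pi hu.1 hu.2
  rcases le_or_gt (cos u) 0 with hc | hc
  · nlinarith [mul_nonneg hu.1.le (neg_nonneg.2 hc)]
  · have hlt : u < π / 2 := by
      by_contra! hge
      exact (cos_nonpos_of_pi_div_two_le_of_le hge (by linarith [hu.2])).not_gt hc
    have ht := lt_tan hu.1 hlt
    rw [tan_eq_sin_div_cos, lt_div_iff₀ hc] at ht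
    linarith

theorem hasDerivAt_sin_sub_mul_cos (u : ℝ) :
    HasDerivAt (fun x => sin x - x * cos x) (u * sin u) u := by
  refine ((hasDerivAt_sin u).sub ((hasDerivAt_id u).mul (hasDerivAt_cos u))).congr_deriv ?_
  simp only [id]; ring

noncomputable def d00Cofactor (u : ℝ) : ℝ :=
  2 * u ^ 3 * sin u + 3 * u ^ 2 * cos u + u * sin u ^ 3 - 6 * u * sin u + 3 * cos u * sin u ^ 2

theorem hasDerivAt_d00Cofactor (u : ℝ) :
    HasDerivAt d00Cofactor
      (3 * u ^ 2 * sin u + 2 * u ^ 3 * cos u - 8 * sin u ^ 3 + 3 * u * sin u ^ 2 * cos u) u := by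
  have hs := hasDerivAt_sin u
  have hc := hasDerivAt_cos u
  have hx := hasDerivAt_id u
  refine ((((((hasDerivAt_pow 3 u).const_mul 2).mul hs).add
      (((hasDerivAt_pow 2 u).const_mul 3).mul hc)).add (hx.mul (hs.pow 3)) |>.sub
      ((hx.const_mul 6).mul hs)).add ((hc.const_mul 3).mul (hs.pow 2))).congr_deriv ?_
  simp only [id, Pi.pow_apply]
  linear_combination (6 * sin u) * sin_sq_add_cos_sq u

theorem hasDerivAt_neg_d00Cofactor_div {u : ℝ} (hD : sin u - u * cos u ≠ 0) :
    HasDerivAt (fun x => -d00Cofactor x / (2 * (sin x - x * cos x)))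
      ((u ^ 2 - 2 * sin u ^ 2 + u * sin u * cos u) ^ 2 / (sin u - u * cos u) ^ 2) u := by
  refine ((hasDerivAt_d00Cofactor u).neg.div ((hasDerivAt_sin_sub_mul_cos u).const_mul 2)
    (mul_ne_zero two_ne_zero hD)).congr_deriv ?_
  simp only [d00Cofactor, Pi.neg_apply]
  field_simp
  linear_combination (u ^ 2 * sin u ^ 2 + 2 * u ^ 4) * sin_sq_add_cos_sq u

theorem double_angle_numerator_eq (u : ℝ) :
    2 * (-1 + u ^ 2 + cos (2 * u)) + u * sin (2 * u)
      = 2 * (u ^ 2 - 2 * sin u ^ 2 + u * sin u * cos u) := by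
  rw [cos_two_mul, cos_sq', sin_two_mul]
  ring

/-- For `u ∈ (0, π)`, the derivative of `u ↦ −d₀⁰(u)/(sin u·(sin u − u·cos u))`
equals `(2(−1 + u² + cos(2u)) + u·sin(2u))²/(4(sin u − u·cos u)²)`. -/
theorem deriv_d00_quotient :
    ∀ u ∈ Ioo 0 π,
      deriv (fun u : ℝ =>
          -((1/2) * sin u * (2 * u ^ 3 * sin u + 3 * u ^ 2 * cos u + u * sin u ^ 3
              - 6 * u * sin u + 3 * cos u * sin u ^ 2))
            / (sin u * (sin u - u * cos u))) u
        = (2 * (-1 + u ^ 2 + cos (2 * u)) + u * sin (2 * u)) ^ 2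
            / (4 * (sin u - u * cos u) ^ 2) := by
  intro u hu
  have hcancel : (fun x => -((1/2) * sin x * d00Cofactor x) / (sin x * (sin x - x * cos x)))
      =ᶠ[𝓝 u] fun x => -d00Cofactor x / (2 * (sin x - x * cos x)) := by
    filter_upwards [isOpen_Ioo.mem_nhds hu] with x hx
    have hsin := (sin_pos_of_pos_of_lt_pi hx.1 hx.2).ne'
    have hD := (sin_sub_mul_cos_pos hx).ne'
    field_simp
  change deriv (fun x => -((1/2) * sin x * d00Cofactor x) / (sin x * (sin x - x * cos x))) u = _
  have hD := (sin_sub_mul_cos_pos hu).ne'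
  rw [hcancel.deriv_eq, (hasDerivAt_neg_d00Cofactor_div hD).deriv, double_angle_numerator_eq]
  field_simp
  ring
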